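/- In the partial suppression setup, for any two distinct items x, y ∈ I, the support of the pair decreases by at least 1 and at most 2: s({x, y}, R) − 2 ≤ s({x, y}, R') ≤ s({x, y}, R) − 1. -/

import Mathlib

variable {α : Type*} [DecidableEq α]

/-- Support of an itemset `I` in a record chunk `R`: the number of records
of `R`, counted with multiplicity, that are supersets of `I`. -/
def supp (I : Finset α) (R : Multiset (Finset α)) : ℕ :=
  (R.filter fun r => I ⊆ r).card

/-! The `c` removed copies of `I` each contained `{x, y}`. Of the records `I \ I_k`, exactly those
with `I_k` disjoint from `{x, y}` contain the pair: all parts but the one or two that meet it.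
The ghosts, being disjoint, add at most one, and none when `{x, y}` is itself a part, since then
`L₁` and `L₂` each receive only one of `x, y`. -/

open Finset Function

variable {ι : Type*}

theorem supp_add (J : Finset α) (R S : Multiset (Finset α)) :
    supp J (R + S) = supp J R + supp J S := by
  simp only [supp, Multiset.filter_add, Multiset.card_add]

theorem supp_nsmul_singleton {J r : Finset α} (h : J ⊆ r) (n : ℕ) :
    supp J (n • {r}) = n := by
  simp [supp, Multiset.filter_nsmul, Multiset.filter_singleton, h]

theorem supp_eq_supp_tsub_add {J r : Finset α} {R : Multiset (Finset α)} {n : ℕ}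
    (hJ : J ⊆ r) (hR : n • {r} ≤ R) :
    supp J R = supp J (R - n • {r}) + n := by
  conv_lhs => rw [← tsub_add_cancel_of_le hR]
  rw [supp_add, supp_nsmul_singleton hJ]

theorem supp_map_sdiff {J I : Finset α} (hJ : J ⊆ I) (s : Finset ι) (P : ι → Finset α) :
    supp J (s.val.map fun i => I \ P i) = #(s.filter fun i => Disjoint J (P i)) := by
  simp only [supp, Multiset.filter_map, Multiset.card_map, subset_sdiff, hJ, true_and,
    Function.comp_def]
  rfl

theorem supp_pair_le_one {J A B : Finset α} (hJ : J.Nonempty) (hAB : Disjoint A B) :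
    supp J {A, B} ≤ 1 := by
  obtain ⟨a, ha⟩ := hJ
  have : ¬ (J ⊆ A ∧ J ⊆ B) := fun h => disjoint_left.mp hAB (h.1 ha) (h.2 ha)
  simp only [supp, Multiset.insert_eq_cons, Multiset.filter_cons, Multiset.filter_singleton]
  split_ifs <;> simp_all

theorem supp_pair_eq_zero {J A B : Finset α} (hA : ¬ J ⊆ A) (hB : ¬ J ⊆ B) :
    supp J {A, B} = 0 := by
  simp [supp, Multiset.insert_eq_cons, hA, hB]

theorem not_pair_subset_of_card_inter_eq_one {x y : α} {K L : Finset α} (hxy : x ≠ y)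
    (hK : {x, y} ⊆ K) (hKL : #(K ∩ L) = 1) : ¬ {x, y} ⊆ L := fun h => by
  have := card_le_card (subset_inter hK h)
  rw [card_pair hxy] at this
  omega

theorem mem_iff_eq_of_pairwise_disjoint {β : Type*} {P : ι → Finset β}
    (hP : Pairwise (Disjoint on P)) {x : β} {i k : ι} (hx : x ∈ P i) :
    x ∈ P k ↔ k = i :=
  ⟨fun hk => hP.eq (not_disjoint_iff.mpr ⟨x, hk, hx⟩), fun h => h ▸ hx⟩

theorem filter_disjoint_pair_eq_univ_sdiff [Fintype ι] [DecidableEq ι] {P : ι → Finset α}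
    (hP : Pairwise (Disjoint on P)) {x y : α} {i j : ι} (hx : x ∈ P i) (hy : y ∈ P j) :
    univ.filter (fun k => Disjoint {x, y} (P k)) = univ \ {i, j} := by
  ext k
  simp [disjoint_insert_left, mem_iff_eq_of_pairwise_disjoint hP hx,
    mem_iff_eq_of_pairwise_disjoint hP hy]

theorem partial_suppression_pair_bounds_general
    (I : Finset α)
    (c : ℕ)
    (P : Fin c → Finset α)
    (hPdisj : ∀ i j : Fin c, i ≠ j → Disjoint (P i) (P j))
    (hPcard : ∀ i : Fin c, (P i).card ≤ 2)
    (hPunion : Finset.univ.biUnion P = I)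
    (L₁ L₂ : Finset α)
    (hLdisj : L₁ ∩ L₂ = ∅)
    (hsplit : ∀ i : Fin c, (P i).card = 2 →
      (P i ∩ L₁).card = 1 ∧ (P i ∩ L₂).card = 1)
    (R : Multiset (Finset α))
    (hR : c • ({I} : Multiset (Finset α)) ≤ R)
    (R' : Multiset (Finset α))
    (hR' : R' = (R - c • ({I} : Multiset (Finset α)))
      + (Finset.univ.val.map fun i : Fin c => I \ P i)
      + {L₁, L₂})
    (x y : α) (hxI : x ∈ I) (hyI : y ∈ I) (hxy : x ≠ y) :
    supp {x, y} R - 2 ≤ supp {x, y} R' ∧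
      supp {x, y} R' ≤ supp {x, y} R - 1 := by
  obtain ⟨i, -, hxi⟩ := mem_biUnion.mp (hPunion ▸ hxI)
  obtain ⟨j, -, hyj⟩ := mem_biUnion.mp (hPunion ▸ hyI)
  have hxyI : {x, y} ⊆ I := insert_subset hxI (singleton_subset_iff.mpr hyI)
  have hsuppR := supp_eq_supp_tsub_add hxyI hR
  have hsuppR' : supp {x, y} R' = supp {x, y} (R - c • {I}) + (c - #{i, j})
      + supp {x, y} {L₁, L₂} := by
    rw [hR', supp_add, supp_add, supp_map_sdiff hxyI,
      filter_disjoint_pair_eq_univ_sdiff hPdisj hxi hyj, card_univ_sdiff,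
      Fintype.card_fin]
  have hij_le : #{i, j} ≤ c := by simpa using card_le_univ ({i, j} : Finset (Fin c))
  have hghost := supp_pair_le_one (J := {x, y}) (insert_nonempty _ _)
    (disjoint_iff_inter_eq_empty.mpr hLdisj)
  rcases eq_or_ne i j with rfl | hij
  · -- `{x, y}` is the part `P i`, which `hsplit` divides between the ghosts.
    have hsub : {x, y} ⊆ P i := insert_subset hxi (singleton_subset_iff.mpr hyj)
    have hcard : #(P i) = 2 := le_antisymm (hPcard i) (card_pair hxy ▸ card_le_card hsub)
    obtain ⟨h₁, h₂⟩ := hsplit i hcard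
    have hghost₀ := supp_pair_eq_zero (not_pair_subset_of_card_inter_eq_one hxy hsub h₁)
      (not_pair_subset_of_card_inter_eq_one hxy hsub h₂)
    rw [pair_eq_singleton, card_singleton] at hsuppR' hij_le
    omega
  · rw [card_pair hij] at hsuppR' hij_le
    omega

theorem partial_suppression_pair_bounds
    (I : Finset α) (hI : 2 ≤ I.card)
    (c : ℕ) (hc : c = (I.card + 1) / 2)
    (P : Fin c → Finset α)
    (hPdisj : ∀ i j : Fin c, i ≠ j → Disjoint (P i) (P j))
    (hPne : ∀ i : Fin c, (P i).Nonempty)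
    (hPcard : ∀ i : Fin c, (P i).card ≤ 2)
    (hPunion : Finset.univ.biUnion P = I)
    (L₁ L₂ : Finset α)
    (hLunion : L₁ ∪ L₂ = I) (hLdisj : L₁ ∩ L₂ = ∅)
    (hsplit : ∀ i : Fin c, (P i).card = 2 →
      (P i ∩ L₁).card = 1 ∧ (P i ∩ L₂).card = 1)
    (R : Multiset (Finset α))
    (hR : c • ({I} : Multiset (Finset α)) ≤ R)
    (R' : Multiset (Finset α))
    (hR' : R' = (R - c • ({I} : Multiset (Finset α)))
      + (Finset.univ.val.map fun i : Fin c => I \ P i)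
      + {L₁, L₂})
    (x y : α) (hxI : x ∈ I) (hyI : y ∈ I) (hxy : x ≠ y) :
    supp {x, y} R - 2 ≤ supp {x, y} R' ∧
      supp {x, y} R' ≤ supp {x, y} R - 1 :=
  partial_suppression_pair_bounds_general I c P hPdisj hPcard hPunion L₁ L₂ hLdisj hsplit R hR R'
    hR' x y hxI hyI hxy
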